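/- arXiv:2506.14351 — 3 statements merged into one kernel-verified Lean document; each statement's English description precedes it below -/
import Mathlib

section
/- Let u ∈ M_n(ℂ) be a complex Hadamard matrix and set u₁ := (I_n ⊗ u)·D_u where D_u := √n·Σ_{i,j} \overline{u_{ij}}(E_{ii} ⊗ E_{jj}). Then Ad_{u₁}(I_n ⊗ e₁) = e₂, where e₁ := (1/n)·Σ_{i,j=1}^n E_{ij} and e₂ := Σ_{i=1}^n E_{ii} ⊗ E_{ii}. -/
open Matrix Kronecker

/-- A complex Hadamard matrix of order `n`. -/
def IsCHM {n : ℕ} (u : Matrix (Fin n) (Fin n) ℂ) : Prop :=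
  u ∈ Matrix.unitaryGroup (Fin n) ℂ ∧ ∀ i j, ‖u i j‖ = 1 / Real.sqrt n

/-- `D_u := √n · Σ_{i,j} conj(u_{ij}) (E_{ii} ⊗ E_{jj})`. -/
noncomputable def Du {n : ℕ} (u : Matrix (Fin n) (Fin n) ℂ) :
    Matrix (Fin n × Fin n) (Fin n × Fin n) ℂ :=
  ((Real.sqrt n : ℝ) : ℂ) •
    ∑ i : Fin n, ∑ j : Fin n, (starRingEnd ℂ) (u i j) •
      (Matrix.single i i (1 : ℂ) ⊗ₖ Matrix.single j j (1 : ℂ))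

/-- The projection `e₁ := (1/n) Σ_{i,j} E_{ij}`. -/
noncomputable def e1 (n : ℕ) : Matrix (Fin n) (Fin n) ℂ :=
  (1 / (n : ℂ)) • ∑ i : Fin n, ∑ j : Fin n, Matrix.single i j (1 : ℂ)

/-- The projection `e₂ := Σ_i E_{ii} ⊗ E_{ii}`. -/
noncomputable def e2 (n : ℕ) : Matrix (Fin n × Fin n) (Fin n × Fin n) ℂ :=
  ∑ i : Fin n, Matrix.single i i (1 : ℂ) ⊗ₖ Matrix.single i i (1 : ℂ)

/-!
For each `a`, the `a`-th diagonal block of `u₁` is `√n · u · diag(conj (u a ·))`. It sends the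
normalised all-ones vector `ξ` (with `e₁ = ξ ξ*`) to `u · conj (u a ·) = e_a`, by unitarity of `u`.
Hence `w := u₁ (1 ⊗ e₁)` has entries `w (a,b) (g,h) = δ_{ag} δ_{ab} / √n`, and since `1 ⊗ e₁` is a
self-adjoint idempotent, `Ad_{u₁}(1 ⊗ e₁) = w w*`, which is computed entrywise to be `e₂`.
-/

lemma ofReal_sqrt_natCast_mul_self (n : ℕ) :
    ((Real.sqrt n : ℝ) : ℂ) * ((Real.sqrt n : ℝ) : ℂ) = n := by
  rw [← Complex.ofReal_mul, Real.mul_self_sqrt n.cast_nonneg, Complex.ofReal_natCast]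

lemma ofReal_sqrt_natCast_mul_inv (n : ℕ) :
    ((Real.sqrt n : ℝ) : ℂ) * (n : ℂ)⁻¹ = ((Real.sqrt n : ℝ) : ℂ)⁻¹ := by
  rw [← ofReal_sqrt_natCast_mul_self, mul_inv, ← mul_assoc]
  simpa using inv_mul_mul_self (((Real.sqrt n : ℝ) : ℂ)⁻¹)

section
variable {n : ℕ}

lemma Du_eq_diagonal (u : Matrix (Fin n) (Fin n) ℂ) :
    Du u = diagonal fun p => ((Real.sqrt n : ℝ) : ℂ) * starRingEnd ℂ (u p.1 p.2) := by
  simp only [Du, single_kronecker_single, mul_one, smul_single, smul_eq_mul]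
  rw [← Fintype.sum_prod_type' (f := fun i j => single (i, j) (i, j) (starRingEnd ℂ (u i j))),
    sum_single_eq_diagonal, ← diagonal_smul]
  rfl

lemma e1_apply (i j : Fin n) : e1 n i j = (n : ℂ)⁻¹ := by
  simp [e1, sum_sum_single]

lemma e2_apply (a b c d : Fin n) :
    e2 n (a, b) (c, d) = if a = b ∧ a = c ∧ a = d then 1 else 0 := by
  simp only [e2, Matrix.sum_apply, kroneckerMap_apply, single_apply, ite_and, mul_ite, mul_one,
    mul_zero, Finset.sum_ite_eq', Finset.mem_univ, ↓reduceIte]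
  grind

lemma isHermitian_e1 : (e1 n).IsHermitian := by
  ext i j
  simp [e1_apply]

lemma isIdempotentElem_e1 : IsIdempotentElem (e1 n) := by
  ext i j
  have hn : (n : ℂ) ≠ 0 := by exact_mod_cast (Fin.pos i).ne'
  simp only [mul_apply, e1_apply, Finset.sum_const, Finset.card_univ, Fintype.card_fin, nsmul_eq_mul]
  field_simp

lemma one_kronecker_mul_Du_apply (u : Matrix (Fin n) (Fin n) ℂ) (a b c d : Fin n) :
    (((1 : Matrix (Fin n) (Fin n) ℂ) ⊗ₖ u) * Du u) (a, b) (c, d) =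
      if a = c then ((Real.sqrt n : ℝ) : ℂ) * (u b d * starRingEnd ℂ (u a d)) else 0 := by
  rw [Du_eq_diagonal, mul_diagonal]
  by_cases h : a = c
  · subst h
    simp only [kroneckerMap_apply, one_apply_eq, one_mul, if_true]
    ring
  · simp [h]

lemma one_kronecker_mul_Du_mul_one_kronecker_e1_apply {u : Matrix (Fin n) (Fin n) ℂ}
    (hu : u * uᴴ = 1) (a b g h : Fin n) :
    (((1 : Matrix (Fin n) (Fin n) ℂ) ⊗ₖ u) * Du u * ((1 : Matrix (Fin n) (Fin n) ℂ) ⊗ₖ e1 n))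
        (a, b) (g, h) =
      if a = g ∧ b = a then ((Real.sqrt n : ℝ) : ℂ)⁻¹ else 0 := by
  have hrow : ∑ d, u b d * starRingEnd ℂ (u a d) = if b = a then 1 else 0 := by
    simpa [mul_apply, one_apply] using congrFun (congrFun hu b) a
  rw [mul_apply, Fintype.sum_prod_type]
  simp only [one_kronecker_mul_Du_apply, kroneckerMap_apply, one_apply, e1_apply, ite_mul,
    zero_mul, one_mul, mul_ite, mul_zero, Finset.sum_ite_irrel, Finset.sum_const_zero]
  rw [← Finset.sum_mul, ← Finset.mul_sum, hrow, ← ofReal_sqrt_natCast_mul_inv]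
  split_ifs <;> simp_all

lemma mul_conjTranspose_self_eq_e2 {w : Matrix (Fin n × Fin n) (Fin n × Fin n) ℂ}
    (hw : ∀ a b g h, w (a, b) (g, h) = if a = g ∧ b = a then ((Real.sqrt n : ℝ) : ℂ)⁻¹ else 0) :
    w * wᴴ = e2 n := by
  ext ⟨a, b⟩ ⟨e, f⟩
  have hn : (n : ℂ) ≠ 0 := by exact_mod_cast (Fin.pos a).ne'
  have hnorm : (n : ℂ) * (((Real.sqrt n : ℝ) : ℂ)⁻¹ * ((Real.sqrt n : ℝ) : ℂ)⁻¹) = 1 := by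
    rw [← mul_inv, ofReal_sqrt_natCast_mul_self, mul_inv_cancel₀ hn]
  rw [mul_apply, Fintype.sum_prod_type]
  by_cases h : a = b ∧ a = e ∧ a = f
  · obtain ⟨rfl, rfl, rfl⟩ := h
    simp [hw, e2_apply, hnorm]
  · rw [e2_apply, if_neg h]
    refine Finset.sum_eq_zero fun g _ => Finset.sum_eq_zero fun k _ => ?_
    rw [conjTranspose_apply, hw, hw]
    split_ifs <;> simp_all

end

/-- For a complex Hadamard matrix `u` and `u₁ := (I_n ⊗ u)·D_u`, one has
`Ad_{u₁}(I_n ⊗ e₁) = e₂`. -/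
theorem stmt6 (n : ℕ) (u : Matrix (Fin n) (Fin n) ℂ) (hu : IsCHM u)
    (u₁ : Matrix (Fin n × Fin n) (Fin n × Fin n) ℂ)
    (hu₁ : u₁ = ((1 : Matrix (Fin n) (Fin n) ℂ) ⊗ₖ u) * Du u) :
    u₁ * ((1 : Matrix (Fin n) (Fin n) ℂ) ⊗ₖ e1 n) * u₁ᴴ = e2 n := by
  set p := (1 : Matrix (Fin n) (Fin n) ℂ) ⊗ₖ e1 n
  have hp : p = p * pᴴ := by
    rw [conjTranspose_kronecker, conjTranspose_one, isHermitian_e1.eq, ← mul_kronecker_mul,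
      one_mul, isIdempotentElem_e1.eq]
  have hw : ∀ a b g h, (u₁ * p) (a, b) (g, h) =
      if a = g ∧ b = a then ((Real.sqrt n : ℝ) : ℂ)⁻¹ else 0 := by
    subst hu₁
    exact one_kronecker_mul_Du_mul_one_kronecker_e1_apply (mem_unitaryGroup_iff.mp hu.1)
  rw [← mul_conjTranspose_self_eq_e2 hw, conjTranspose_mul]
  conv_lhs => rw [hp]
  simp only [Matrix.mul_assoc]
end

section
/- For an even integer n ≥ 4 with primitive n-th root of unity ω, let P := E_{13} + E_{21} + E_{32} + Σ_{k=4}^n E_{kk}, D₁ := diag{1,ω,…,ω^{n-1}}, D_{n/2} := D₁^{n/2}, and F_n the DFT matrix. Then for every α ∈ ℂ, Ad_{PF_n}(D_{n/2}) ≠ α·Ad_{D₁PF_n}(D_{n/2}). -/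
open Matrix

noncomputable def DFT (n : ℕ) : Matrix (Fin n) (Fin n) ℂ :=
  fun i j => (1 / ((Real.sqrt n : ℝ) : ℂ)) *
    Complex.exp (2 * Real.pi * Complex.I * (i : ℕ) * (j : ℕ) / n)

noncomputable def omg (n : ℕ) : ℂ := Complex.exp (2 * Real.pi * Complex.I / n)

noncomputable def D1 (n : ℕ) : Matrix (Fin n) (Fin n) ℂ :=
  Matrix.diagonal fun i => omg n ^ (i : ℕ)

open Equiv

/-!
`Ad_{F_n}(D₁^m)` has entry `1` at `(a, b)` whenever `a + m ≡ b (mod n)`; for `m = n/2` it is the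
permutation matrix of the involution `k ↦ k + n/2`, and `M := Ad_{P F_n}(D_{n/2})` is obtained by
permuting its rows and columns by `P`. Moreover `Ad_{D₁ P F_n}(D_{n/2}) = D₁ M D₁*`, so if
`M = α D₁ M D₁*` and both `M i j` and `M j i` are nonzero, then `α ω^{i-j} = 1 = α ω^{j-i}` and
hence `ω^{2i} = ω^{2j}`. Since `P` sends row `2` to row `1` but fixes row `j = 1 + n/2`, this
applies to `i = 2` and gives `ω^4 = ω^{n+2} = ω^2`, which is impossible for a primitive `n`-th
root of unity with `n ≥ 4`.
-/

lemma sq_eq_sq_of_eq_smul_diagonal_mul_mul_conjTranspose {ι : Type*} [Fintype ι] [DecidableEq ι]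
    {N : Matrix ι ι ℂ} {d : ι → ℂ} (hd : ∀ i, ‖d i‖ = 1) {α : ℂ}
    (h : N = α • (diagonal d * N * (diagonal d)ᴴ)) {i j : ι} (hij : N i j ≠ 0)
    (hji : N j i ≠ 0) : d i ^ 2 = d j ^ 2 := by
  have hentry : ∀ k l, N k l ≠ 0 → α * d k * star (d l) = 1 := fun k l hkl => by
    have := congrFun (congrFun h k) l
    rw [Matrix.smul_apply, diagonal_conjTranspose, mul_diagonal, diagonal_mul, smul_eq_mul] at this
    apply mul_right_cancel₀ hkl
    simp only [Pi.star_apply] at this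
    linear_combination -this
  have hunit : ∀ k, star (d k) * d k = 1 := fun k => by
    rw [Complex.star_def, Complex.conj_mul', hd]; norm_num
  linear_combination -d i ^ 2 * hentry j i hji + α * d i * d j * hunit i
    + d j ^ 2 * hentry i j hij - α * d i * d j * hunit j

lemma omg_isPrimitiveRoot {n : ℕ} (hn : n ≠ 0) : IsPrimitiveRoot (omg n) n :=
  Complex.isPrimitiveRoot_exp n hn

lemma DFT_apply {n : ℕ} (a k : Fin n) :
    DFT n a k = ((Real.sqrt n : ℝ) : ℂ)⁻¹ * omg n ^ ((a : ℕ) * k) := by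
  rw [DFT, omg, ← Complex.exp_nat_mul, one_div]
  congr 2
  push_cast
  ring

lemma DFT_mul_D1_pow_mul_conjTranspose_apply_of_modEq {n m : ℕ} {a b : Fin n}
    (hab : a + m ≡ b [MOD n]) : (DFT n * D1 n ^ m * (DFT n)ᴴ) a b = 1 := by
  have hn : n ≠ 0 := a.pos.ne'
  have hω := omg_isPrimitiveRoot hn
  have hnorm : ∀ k : ℕ, star (omg n ^ k) * omg n ^ k = 1 := fun k => by
    rw [Complex.star_def, Complex.conj_mul', norm_pow, hω.norm'_eq_one hn]; norm_num
  have hsqrt : star ((Real.sqrt n : ℝ) : ℂ)⁻¹ * ((Real.sqrt n : ℝ) : ℂ)⁻¹ = (n : ℂ)⁻¹ := by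
    rw [star_inv₀, Complex.star_def, Complex.conj_ofReal, ← mul_inv, ← Complex.ofReal_mul,
      Real.mul_self_sqrt n.cast_nonneg, Complex.ofReal_natCast]
  have hshift : omg n ^ ((a : ℕ) + m) = omg n ^ (b : ℕ) := pow_eq_pow_of_modEq hab hω.pow_eq_one
  have hterm : ∀ k : Fin n, DFT n a k * (omg n ^ (k : ℕ)) ^ m * star (DFT n b k) = (n : ℂ)⁻¹ := by
    intro k
    have hphase : omg n ^ ((a : ℕ) * k) * (omg n ^ (k : ℕ)) ^ m = omg n ^ ((b : ℕ) * k) := by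
      rw [← pow_mul, ← pow_add, mul_comm (k : ℕ) m, ← add_mul, pow_mul, hshift, ← pow_mul]
    rw [DFT_apply, DFT_apply, star_mul', ← hsqrt]
    linear_combination ((Real.sqrt n : ℂ)⁻¹ * star ((Real.sqrt n : ℂ)⁻¹) *
      star (omg n ^ ((b : ℕ) * k))) * hphase +
      (Real.sqrt n : ℂ)⁻¹ * star ((Real.sqrt n : ℂ)⁻¹) * hnorm ((b : ℕ) * k)
  rw [D1, diagonal_pow, mul_apply]
  simp only [mul_diagonal, conjTranspose_apply, Pi.pow_apply, hterm, Finset.sum_const,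
    Finset.card_univ, Fintype.card_fin, nsmul_eq_mul]
  field_simp

lemma sum_single_eq_permMatrix_swap_mul_swap {R : Type*} [Semiring R] {n : ℕ} (hn : 3 ≤ n) :
    single (⟨0, by omega⟩ : Fin n) ⟨2, by omega⟩ (1 : R) + single ⟨1, by omega⟩ ⟨0, by omega⟩ 1 +
      single ⟨2, by omega⟩ ⟨1, by omega⟩ 1 +
      ∑ i : Fin n, (if 3 ≤ (i : ℕ) then single i i (1 : R) else 0) =
    (swap ⟨0, by omega⟩ ⟨2, by omega⟩ * swap ⟨1, by omega⟩ ⟨2, by omega⟩ : Perm (Fin n)).permMatrix R := by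
  have hdiag : ∀ c : Fin n, (if 3 ≤ (c : ℕ) then single c c (1 : R) else 0) =
      single c c (if 3 ≤ (c : ℕ) then 1 else 0) := fun c => by split_ifs <;> simp
  simp only [hdiag, sum_single_eq_diagonal]
  ext ⟨i, hi⟩ ⟨a, ha⟩
  rcases i with _ | _ | _ | i <;>
    simp [single_apply, diagonal_apply, PEquiv.toMatrix_apply, swap_apply_def, Fin.ext_iff]

lemma permMatrix_mul_mul_mul_conjTranspose {ι R : Type*} [Fintype ι] [DecidableEq ι]
    [CommSemiring R] [StarRing R] (σ : Perm ι) (U X : Matrix ι ι R) :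
    σ.permMatrix R * U * X * (σ.permMatrix R * U)ᴴ = (U * X * Uᴴ).submatrix σ σ := by
  rw [PEquiv.toMatrix_toPEquiv_mul, conjTranspose_submatrix,
    submatrix_mul _ _ _ _ _ Function.bijective_id, submatrix_mul _ _ _ _ _ Function.bijective_id]
  rfl

lemma mul_mul_conjTranspose_mul_assoc {ι R : Type*} [Fintype ι] [CommSemiring R] [StarRing R]
    (A B X : Matrix ι ι R) : A * B * X * (A * B)ᴴ = A * (B * X * Bᴴ) * Aᴴ := by
  simp only [conjTranspose_mul, Matrix.mul_assoc]

lemma Nat.ModEq.add_half_symm {n a b : ℕ} (hn : Even n) (h : a + n / 2 ≡ b [MOD n]) :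
    b + n / 2 ≡ a [MOD n] :=
  calc b + n / 2 ≡ a + n / 2 + n / 2 [MOD n] := (h.add_right _).symm
    _ = a + n := by obtain ⟨r, rfl⟩ := hn; omega
    _ ≡ a [MOD n] := Nat.add_mod_right a n

lemma pow_add_half_sq {M : Type*} [Monoid M] {ζ : M} {n : ℕ} (hζ : ζ ^ n = 1) (hn : Even n)
    (k : ℕ) : (ζ ^ (k + n / 2)) ^ 2 = (ζ ^ k) ^ 2 := by
  rw [← pow_mul, ← pow_mul, add_mul, Nat.div_mul_cancel (even_iff_two_dvd.mp hn), pow_add, hζ,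
    mul_one]

/-- For even `n ≥ 4`, with `P := E_{13} + E_{21} + E_{32} + Σ_{k=4}^n E_{kk}`
(1-indexed; here 0-indexed as `E_{02} + E_{10} + E_{21} + Σ_{k≥3} E_{kk}`) and
`D_{n/2} := D₁^{n/2}`, one has `Ad_{P·F_n}(D_{n/2}) ≠ α·Ad_{D₁·P·F_n}(D_{n/2})`
for every `α ∈ ℂ`. -/
theorem stmt18 (n : ℕ) (hn : 4 ≤ n) (he : Even n)
    (P : Matrix (Fin n) (Fin n) ℂ)
    (hP : P = Matrix.single (⟨0, by omega⟩ : Fin n) (⟨2, by omega⟩ : Fin n) 1 +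
      Matrix.single (⟨1, by omega⟩ : Fin n) (⟨0, by omega⟩ : Fin n) 1 +
      Matrix.single (⟨2, by omega⟩ : Fin n) (⟨1, by omega⟩ : Fin n) 1 +
      ∑ i : Fin n, if 3 ≤ (i : ℕ) then Matrix.single i i (1 : ℂ) else 0) :
    ∀ α : ℂ,
      (P * DFT n) * D1 n ^ (n / 2) * (P * DFT n)ᴴ ≠
        α • ((D1 n * P * DFT n) * D1 n ^ (n / 2) * (D1 n * P * DFT n)ᴴ) := by
  intro α hα
  have hω := omg_isPrimitiveRoot (n := n) (by omega)
  set σ : Perm (Fin n) := swap ⟨0, by omega⟩ ⟨2, by omega⟩ * swap ⟨1, by omega⟩ ⟨2, by omega⟩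
  rw [hP.trans (sum_single_eq_permMatrix_swap_mul_swap (by omega)), Matrix.mul_assoc (D1 n),
    mul_mul_conjTranspose_mul_assoc (D1 n), permMatrix_mul_mul_mul_conjTranspose] at hα
  have hσ2 : σ ⟨2, by omega⟩ = ⟨1, by omega⟩ := by simp [σ, swap_apply_def, Fin.ext_iff]
  have hσj : σ ⟨1 + n / 2, by omega⟩ = ⟨1 + n / 2, by omega⟩ := by
    rw [Perm.mul_apply, swap_apply_of_ne_of_ne (x := (⟨1 + n / 2, by omega⟩ : Fin n)),
      swap_apply_of_ne_of_ne] <;> simp only [ne_eq, Fin.ext_iff] <;> omega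
  have hmod : 1 + n / 2 ≡ 1 + n / 2 [MOD n] := Nat.ModEq.refl _
  have h1j := DFT_mul_D1_pow_mul_conjTranspose_apply_of_modEq (a := ⟨1, by omega⟩)
    (b := ⟨1 + n / 2, by omega⟩) hmod
  have hj1 := DFT_mul_D1_pow_mul_conjTranspose_apply_of_modEq (a := ⟨1 + n / 2, by omega⟩)
    (b := ⟨1, by omega⟩) (hmod.add_half_symm he)
  have hsq : (omg n ^ 2) ^ 2 = (omg n ^ (1 + n / 2)) ^ 2 :=
    sq_eq_sq_of_eq_smul_diagonal_mul_mul_conjTranspose (i := ⟨2, by omega⟩)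
    (j := ⟨1 + n / 2, by omega⟩) (fun k => by rw [norm_pow, hω.norm'_eq_one (by omega), one_pow]) hα
    (by rw [submatrix_apply, hσ2, hσj, h1j]; exact one_ne_zero)
    (by rw [submatrix_apply, hσ2, hσj, hj1]; exact one_ne_zero)
  rw [pow_add_half_sq hω.pow_eq_one he, pow_one, sq (omg n ^ 2), mul_right_eq_self₀] at hsq
  exact hsq.elim (hω.pow_ne_one_of_pos_of_lt two_ne_zero (by omega))
    (pow_ne_zero 2 (hω.ne_zero (by omega)))
end

section
/- Let u ∈ M_n(ℂ) be a complex Hadamard matrix and let u₂ := (I_n ⊗ u)·D_u·(u ⊗ I_n) ∈ M_n(ℂ) ⊗ M_n(ℂ). Then Ad_{u₂}(Σ_{i=1}^n E_{ii}⊗E_{ii}) = ((1/n)Σ_{i,j=1}^n E_{ij}) ⊗ I_n in M_n(ℂ) ⊗ M_n(ℂ). -/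
open Matrix Kronecker

/-- `f₁ := (1/n) Σ_{i,j} E_{ij}`. -/
noncomputable def f1 (n : ℕ) : Matrix (Fin n) (Fin n) ℂ :=
  (1 / (n : ℂ)) • ∑ i : Fin n, ∑ j : Fin n, Matrix.single i j (1 : ℂ)

/-- `f₂ := Σ_i E_{ii} ⊗ E_{ii}`. -/
noncomputable def f2 (n : ℕ) : Matrix (Fin n × Fin n) (Fin n × Fin n) ℂ :=
  ∑ i : Fin n, Matrix.single i i (1 : ℂ) ⊗ₖ Matrix.single i i (1 : ℂ)

lemma Du_apply {n : ℕ} (u : Matrix (Fin n) (Fin n) ℂ) (p q : Fin n × Fin n) :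
    Du u p q = if p = q then (Real.sqrt n : ℂ) * (starRingEnd ℂ) (u p.1 p.2) else 0 := by
  obtain ⟨i, j⟩ := p; obtain ⟨k, l⟩ := q
  simp [Du, Matrix.sum_apply, Matrix.single_apply, kroneckerMap_apply, ite_and,
    Finset.sum_ite_eq, Prod.ext_iff]
  aesop

lemma f2_apply {n : ℕ} (p q : Fin n × Fin n) :
    f2 n p q = if p.1 = p.2 ∧ p = q then 1 else 0 := by
  obtain ⟨c, d⟩ := p; obtain ⟨c', d'⟩ := q
  simp [f2, Matrix.sum_apply, Matrix.single_apply, kroneckerMap_apply, ite_and,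
    Finset.sum_ite_eq, Prod.ext_iff]
  aesop

lemma u2_apply {n : ℕ} (u : Matrix (Fin n) (Fin n) ℂ) (a b c d : Fin n) :
    (((1 : Matrix (Fin n) (Fin n) ℂ) ⊗ₖ u) * Du u *
      (u ⊗ₖ (1 : Matrix (Fin n) (Fin n) ℂ))) (a,b) (c,d)
      = (Real.sqrt n : ℂ) * (u a c * ((starRingEnd ℂ) (u a d) * u b d)) := by
  simp [mul_apply, Fintype.sum_prod_type, Du_apply, kroneckerMap_apply,
    one_apply, ite_and, Finset.mul_sum, Finset.sum_mul, mul_comm, mul_left_comm]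

/-- For a complex Hadamard matrix `u` and `u₂ := (I_n ⊗ u)·D_u·(u ⊗ I_n)`,
one has `Ad_{u₂}(Σ_i E_{ii} ⊗ E_{ii}) = ((1/n) Σ_{i,j} E_{ij}) ⊗ I_n`. -/
theorem stmt19 (n : ℕ) (u : Matrix (Fin n) (Fin n) ℂ) (hu : IsCHM u)
    (u₂ : Matrix (Fin n × Fin n) (Fin n × Fin n) ℂ)
    (hu₂ : u₂ = ((1 : Matrix (Fin n) (Fin n) ℂ) ⊗ₖ u) * Du u *
      (u ⊗ₖ (1 : Matrix (Fin n) (Fin n) ℂ))) :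
    u₂ * f2 n * u₂ᴴ = f1 n ⊗ₖ (1 : Matrix (Fin n) (Fin n) ℂ) := by
  ext ⟨a, b⟩ ⟨a', b'⟩
  -- positivity of n: if n = 0 the statement is trivial (Fin 0 empty)
  rcases Nat.eq_zero_or_pos n with h0 | hn
  · subst h0; exact absurd a.2 (by simp)
  have hn' : (0:ℝ) < n := by exact_mod_cast hn
  -- modulus condition
  have habs : ∀ i j, (starRingEnd ℂ) (u i j) * u i j = 1 / (n:ℂ) := by
    intro i j
    have h1 : (starRingEnd ℂ) (u i j) * u i j = ((‖u i j‖ ^ 2 : ℝ) : ℂ) := by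
      rw [mul_comm, Complex.mul_conj, Complex.sq_norm]
    rw [h1, hu.2]
    rw [div_pow, one_pow, Real.sq_sqrt hn'.le]
    push_cast; ring_nf
  -- unitarity
  have huni : ∀ i j, ∑ c, u i c * (starRingEnd ℂ) (u j c) = if i = j then 1 else 0 := by
    intro i j
    have := hu.1
    rw [Matrix.mem_unitaryGroup_iff] at this
    have h2 := congrFun (congrFun this i) j
    simpa [mul_apply, one_apply, conjTranspose_apply] using h2
  -- compute LHS entrywise
  have key : (u₂ * f2 n * u₂ᴴ) (a,b) (a',b')
      = ∑ c, u₂ (a,b) (c,c) * (starRingEnd ℂ) (u₂ (a',b') (c,c)) := by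
    rw [mul_apply]
    rw [Fintype.sum_prod_type]
    congr 1; ext c
    rw [Finset.sum_eq_single c]
    · rw [mul_apply, Fintype.sum_prod_type, conjTranspose_apply]
      congr 1
      rw [Finset.sum_eq_single c]
      · rw [Finset.sum_eq_single c]
        · simp [f2_apply]
        · intro d _ hd; simp [f2_apply, hd]
        · simp
      · intro e _ he
        rw [Finset.sum_eq_zero]; intro d _
        simp [f2_apply]; intro h; exact fun h2 _ => absurd (h ▸ h2) he
      · simp
    · intro d _ hd
      rw [mul_apply]
      rw [Finset.sum_eq_zero]; · simp
      rintro ⟨e, f⟩ _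
      simp [f2_apply]; rintro h rfl rfl; exact absurd h.symm hd
    · simp
  rw [key]
  have hrw : ∀ c, u₂ (a,b) (c,c) * (starRingEnd ℂ) (u₂ (a',b') (c,c))
      = u b c * (starRingEnd ℂ) (u b' c) * (1 / (n:ℂ)) := by
    intro c
    rw [hu₂, u2_apply, u2_apply]
    simp only [_root_.map_mul, Complex.conj_conj, Complex.conj_ofReal]
    have h1 := habs a c
    have h2 := habs a' c
    have hsq : ((Real.sqrt n : ℝ):ℂ) * ((Real.sqrt n : ℝ):ℂ) = (n:ℂ) := by
      rw [← Complex.ofReal_mul, Real.mul_self_sqrt hn'.le]; norm_num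
    have hne : (n:ℂ) ≠ 0 := by exact_mod_cast hn.ne'
    calc ↑√↑n * (u a c * ((starRingEnd ℂ) (u a c) * u b c)) *
        (↑√↑n * ((starRingEnd ℂ) (u a' c) * (u a' c * (starRingEnd ℂ) (u b' c))))
        = (↑√↑n * ↑√↑n) * ((starRingEnd ℂ) (u a c) * u a c) *
          ((starRingEnd ℂ) (u a' c) * u a' c) * (u b c * (starRingEnd ℂ) (u b' c)) := by ring
      _ = (n:ℂ) * (1/(n:ℂ)) * (1/(n:ℂ)) * (u b c * (starRingEnd ℂ) (u b' c)) := by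
          rw [hsq, h1, h2]
      _ = u b c * (starRingEnd ℂ) (u b' c) * (1 / (n:ℂ)) := by
          field_simp
  simp only [hrw, ← Finset.sum_mul, huni]
  -- RHS
  have hf1 : f1 n a a' = 1 / (n:ℂ) := by
    simp [f1, Matrix.sum_apply, Matrix.single_apply, ite_and, Finset.sum_ite_eq]
  simp [kroneckerMap_apply, hf1, one_apply]
end
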